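/- arXiv:math/0211008 — 2 statements merged into one kernel-verified Lean document; each statement's English description precedes it below -/
import Mathlib

section
/- Let R be an F-finite reduced Noetherian ring of prime characteristic p and let c ∈ R° be an element such that the localization R_c is strongly F-regular. Then there exists an integer n ≥ 1 such that c^n is an a-test element for every ideal a of R. -/
open TensorProduct

universe u v

section TightClosureBasics

variable (R : Type u) [CommRing R]

/-- `R°`: the set of elements of `R` not contained in any minimal prime ideal. -/
def Rcirc : Set R := {c | ∀ P ∈ minimalPrimes R, c ∉ P}

/-- `I^{[q]}`: the ideal generated by the `q`-th powers of elements of `I`. -/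
def idealBracketPow (I : Ideal R) (q : ℕ) : Ideal R :=
  Ideal.span ((fun x => x ^ q) '' (I : Set R))

/-- The `a`-tight closure `I^{*a}` of an ideal `I ⊆ R` (as a subset of `R`):
all `z` such that for some `c ∈ R°` one has `c z^q a^q ⊆ I^{[q]}` for all `q = p^e ≫ 0`. -/
def idealTC (p : ℕ) (a I : Ideal R) : Set R :=
  {z | ∃ c ∈ Rcirc R, ∃ e₀ : ℕ, ∀ e, e₀ ≤ e → ∀ α ∈ a ^ p ^ e,
    c * z ^ p ^ e * α ∈ idealBracketPow R I (p ^ e)}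

variable (p : ℕ) [Fact p.Prime] [CharP R p]

/-- `ᵉR`: the ring `R` viewed as an `R`-algebra via the `e`-fold Frobenius
`x ↦ x ^ p ^ e`. -/
def FrobAlg (_p _e : ℕ) : Type u := R

instance (e : ℕ) : CommRing (FrobAlg R p e) := inferInstanceAs (CommRing R)

noncomputable instance (e : ℕ) : Algebra R (FrobAlg R p e) :=
  RingHom.toAlgebra (iterateFrobenius R p e)

/-- The Frobenius functor `F^e(M) = ᵉR ⊗_R M`, an `R`-module via the left factor. -/
def FrobPow (e : ℕ) (M : Type v) [AddCommGroup M] [Module R M] : Type (max u v) :=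
  TensorProduct R (FrobAlg R p e) M

variable {M : Type v} [AddCommGroup M] [Module R M]

noncomputable instance (e : ℕ) : AddCommGroup (FrobPow R p e M) :=
  inferInstanceAs (AddCommGroup (TensorProduct R (FrobAlg R p e) M))

noncomputable instance (e : ℕ) : Module R (FrobPow R p e M) :=
  inferInstanceAs (Module (FrobAlg R p e) (TensorProduct R (FrobAlg R p e) M))

/-- The `e`-times iterated Frobenius map `M → F^e(M)`, `z ↦ z^q := 1 ⊗ z`. -/
noncomputable def frobM (e : ℕ) (z : M) : FrobPow R p e M :=
  (1 : FrobAlg R p e) ⊗ₜ[R] z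

/-- `N^{[q]}_M`: the image of `F^e(N) → F^e(M)`, i.e. the `R`-span of the image of
`N` under the Frobenius map `M → F^e(M)`. -/
noncomputable def bracketPow (e : ℕ) (N : Submodule R M) : Submodule R (FrobPow R p e M) :=
  Submodule.span R (frobM R p e '' (N : Set M))

/-- The `a`-tight closure `N^{*a}_M` of a submodule `N ⊆ M`: all `z ∈ M` such that for
some `c ∈ R°` one has `c z^q a^q ⊆ N^{[q]}_M` for all `q = p^e ≫ 0`. -/
noncomputable def modTC (a : Ideal R) (N : Submodule R M) : Set M :=
  {z | ∃ c ∈ Rcirc R, ∃ e₀ : ℕ, ∀ e, e₀ ≤ e → ∀ α ∈ a ^ p ^ e,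
    (c * α) • frobM R p e z ∈ bracketPow R p e N}

/-- The annihilator ideal of a subset of a module. -/
def setAnn (S : Set M) : Ideal R where
  carrier := {r | ∀ z ∈ S, r • z = 0}
  add_mem' := by
    intro r s hr hs z hz
    rw [add_smul, hr z hz, hs z hz, add_zero]
  zero_mem' := by
    intro z _
    rw [zero_smul]
  smul_mem' := by
    intro c r hr z hz
    rw [smul_eq_mul, mul_smul, hr z hz, smul_zero]

/-- `τ(a)`: the intersection, over all finitely generated `R`-modules `M`, of
`Ann_R (0^{*a}_M)`. -/
noncomputable def tauIdeal (a : Ideal R) : Ideal R where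
  carrier := {r | ∀ (N : Type u) [AddCommGroup N] [Module R N], Module.Finite R N →
      ∀ z ∈ modTC R p a (⊥ : Submodule R N), r • z = 0}
  add_mem' := by
    intro r s hr hs N _ _ hN z hz
    rw [add_smul, hr N hN z hz, hs N hN z hz, add_zero]
  zero_mem' := by
    intro N _ _ _ z _
    rw [zero_smul]
  smul_mem' := by
    intro c r hr N _ _ hN z hz
    rw [smul_eq_mul, mul_smul, hr N hN z hz, smul_zero]

end TightClosureBasics

section RegularExcellent

/-- A regular local ring: a Noetherian local ring whose maximal ideal can be generated
by `dim R` elements. -/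
def IsRegularLocal (A : Type v) [CommRing A] : Prop :=
  ∃ h : IsLocalRing A, letI := h
  IsNoetherianRing A ∧
    ∃ s : Finset A, Ideal.span (s : Set A) = IsLocalRing.maximalIdeal A ∧
      (s.card : WithBot ℕ∞) = ringKrullDim A

/-- A `k`-algebra `C` over a field `k` is geometrically regular if for every finite field
extension `k'` of `k` all localizations of `k' ⊗_k C` at primes are regular local rings. -/
def IsGeometricallyRegular (k : Type u) (C : Type u) [Field k] [CommRing C] [Algebra k C] :
    Prop :=
  ∀ (k' : Type u) [Field k'] [Algebra k k'], Module.Finite k k' →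
    ∀ (Q : Ideal (TensorProduct k k' C)) (hQ : Q.IsPrime), letI := hQ
      IsRegularLocal (Localization.AtPrime Q)

/-- `A` is a G-ring (Grothendieck ring): for every prime `P` of `A` the fibres of the
completion map `A_P → (A_P)^` are geometrically regular. -/
def IsGRing (A : Type u) [CommRing A] : Prop :=
  ∀ (P : Ideal A) (hP : P.IsPrime), letI := hP
    ∀ (Q : Ideal (Localization.AtPrime P)) (hQ : Q.IsPrime), letI := hQ
      IsGeometricallyRegular
        (IsLocalRing.ResidueField (Localization.AtPrime Q))
        (TensorProduct (Localization.AtPrime P)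
          (IsLocalRing.ResidueField (Localization.AtPrime Q))
          (AdicCompletion (IsLocalRing.maximalIdeal (Localization.AtPrime P))
            (Localization.AtPrime P)))

/-- A ring is catenary if any two saturated chains of primes with the same endpoints
have the same length. -/
def IsCatenary (A : Type*) [CommRing A] : Prop :=
  ∀ c d : LTSeries (PrimeSpectrum A),
    (∀ i : Fin c.length, c.toFun i.castSucc ⋖ c.toFun i.succ) →
    (∀ i : Fin d.length, d.toFun i.castSucc ⋖ d.toFun i.succ) →
    c.head = d.head → c.last = d.last → c.length = d.length

/-- `A` is J-2: the regular locus of every finitely generated `A`-algebra is open. -/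
def IsJ2 (A : Type u) [CommRing A] : Prop :=
  ∀ (n : ℕ) (I : Ideal (MvPolynomial (Fin n) A)),
    IsOpen {P : PrimeSpectrum (MvPolynomial (Fin n) A ⧸ I) |
      IsRegularLocal (Localization.AtPrime P.asIdeal)}

/-- An excellent ring: a Noetherian, universally catenary G-ring satisfying J-2. -/
def IsExcellent (A : Type u) [CommRing A] : Prop :=
  IsNoetherianRing A ∧ (∀ n : ℕ, IsCatenary (MvPolynomial (Fin n) A)) ∧
    IsGRing A ∧ IsJ2 A

/-- A ring is equidimensional if all its minimal primes have the same dimension. -/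
def IsEquidimensional (A : Type*) [CommRing A] : Prop :=
  ∀ P ∈ minimalPrimes A, ringKrullDim (A ⧸ P) = ringKrullDim A

end RegularExcellent

section Misc

variable (R : Type u) [CommRing R]

/-- `x : Fin n → A` is a system of parameters of the local ring `A`: `n = dim A` and
the `x i` generate an ideal primary to the maximal ideal. -/
def IsSOP (A : Type v) [CommRing A] [IsLocalRing A] (n : ℕ) (x : Fin n → A) : Prop :=
  (n : WithBot ℕ∞) = ringKrullDim A ∧
    (Ideal.span (Set.range x)).radical = IsLocalRing.maximalIdeal A

/-- A local ring is F-rational if every ideal generated by a system of parameters is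
tightly closed. -/
def IsFRational (A : Type v) [CommRing A] [IsLocalRing A] (p : ℕ) : Prop :=
  ∀ (n : ℕ) (x : Fin n → A), IsSOP A n x →
    idealTC A p ⊤ (Ideal.span (Set.range x)) = (Ideal.span (Set.range x) : Set A)

/-- The tight integral closure `{I_1, …, I_n}^{⎯*}` of a family of ideals. -/
def tightIntClosure (p : ℕ) {n : ℕ} (I : Fin n → Ideal R) : Set R :=
  {x | ∃ c ∈ Rcirc R, ∃ e₀ : ℕ, ∀ e, e₀ ≤ e → c * x ^ p ^ e ∈ ∑ i, (I i) ^ p ^ e}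

/-- The integral closure of an ideal `J`: all elements satisfying an integral equation
`x^n + a_1 x^{n-1} + ⋯ + a_n = 0` with `a_i ∈ J^i`. -/
def integralClosureOfIdeal (J : Ideal R) : Set R :=
  {x | ∃ n : ℕ, 0 < n ∧ ∃ a : ℕ → R, (∀ i ∈ Finset.range n, a i ∈ J ^ (i + 1)) ∧
    x ^ n + ∑ i ∈ Finset.range n, a i * x ^ (n - 1 - i) = 0}

/-- `x_1, …, x_n` are parameters: the ideal generated by the first `i` of them has
height at least `i`, for each `i`. -/
def AreParameters {n : ℕ} (x : Fin n → R) : Prop :=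
  ∀ i : ℕ, i ≤ n → ∀ (P : Ideal R) (hP : P.IsPrime),
    Ideal.span (x '' {j : Fin n | (j : ℕ) < i}) ≤ P →
      (i : ℕ∞) ≤ Order.height (⟨P, hP⟩ : PrimeSpectrum R)

/-- A regular sequence: each `x i` is a non-zerodivisor modulo its predecessors. -/
def IsRegSeq {n : ℕ} (x : Fin n → R) : Prop :=
  ∀ i : Fin n, ∀ z : R,
    x i * z ∈ Ideal.span (x '' {j : Fin n | j < i}) →
      z ∈ Ideal.span (x '' {j : Fin n | j < i})

/-- A prime ideal of height one. -/
def IsHeightOnePrime (P : Ideal R) : Prop :=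
  ∃ hP : P.IsPrime, Order.height (⟨P, hP⟩ : PrimeSpectrum R) = 1

/-- The `r`-th symbolic power of a (divisorial) ideal `J` in a normal domain:
the intersection of the height-one primary components `J^r R_P ∩ R`. -/
def symbolicPow (J : Ideal R) (r : ℕ) : Ideal R where
  carrier := {x | ∀ P : Ideal R, IsHeightOnePrime R P → ∃ s ∉ P, s * x ∈ J ^ r}
  zero_mem' := by
    intro P hP
    obtain ⟨hP', -⟩ := hP
    exact ⟨1, (Ideal.ne_top_iff_one P).mp hP'.ne_top, by simp⟩
  add_mem' := by
    intro x y hx hy P hP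
    obtain ⟨s, hs, hsx⟩ := hx P hP
    obtain ⟨t, ht, hty⟩ := hy P hP
    obtain ⟨hP', -⟩ := hP
    refine ⟨s * t, fun hmem => ?_, ?_⟩
    · rcases hP'.mem_or_mem hmem with h | h
      · exact hs h
      · exact ht h
    · have heq : s * t * (x + y) = t * (s * x) + s * (t * y) := by ring
      rw [heq]
      exact Ideal.add_mem _ (Ideal.mul_mem_left _ _ hsx) (Ideal.mul_mem_left _ _ hty)
  smul_mem' := by
    intro c x hx P hP
    obtain ⟨s, hs, hsx⟩ := hx P hP
    refine ⟨s, hs, ?_⟩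
    have heq : s * (c • x) = c * (s * x) := by
      simp only [smul_eq_mul]; ring
    rw [heq]
    exact Ideal.mul_mem_left _ _ hsx

/-- Data of an injective hull `E = E_A(A/m)` of the residue field of a local ring:
an injective module together with an essential embedding of the residue field. -/
structure InjectiveHullRF (A : Type u) [CommRing A] [IsLocalRing A] where
  E : Type u
  [acg : AddCommGroup E]
  [mod : Module A E]
  injective : Module.Injective A E
  emb : (A ⧸ IsLocalRing.maximalIdeal A) →ₗ[A] E
  emb_inj : Function.Injective emb
  essential : ∀ N : Submodule A E, N ≠ ⊥ → N ⊓ LinearMap.range emb ≠ ⊥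

attribute [instance] InjectiveHullRF.acg InjectiveHullRF.mod

/-- `ω` is a canonical ideal of the local ring `A`: an ideal whose Matlis dual is the
top local cohomology module `H^d_m(A)`. -/
def IsCanonicalIdeal (A : Type u) [CommRing A] [IsLocalRing A] (ω : Ideal A) : Prop :=
  ∃ d : ℕ, ringKrullDim A = d ∧
    ∃ hull : InjectiveHullRF A,
      Nonempty ((ω →ₗ[A] hull.E) ≃ₗ[A]
        ((localCohomology (IsLocalRing.maximalIdeal A) d).obj (ModuleCat.of A A)))

/-- A normal local ring is `ℚ`-Gorenstein if it admits a canonical module (here realized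
as a canonical ideal `ω`) some symbolic power `ω^{(r)}`, `r ≥ 1`, of which is principal,
i.e. isomorphic to `A`. -/
def IsQGorenstein (A : Type u) [CommRing A] [IsLocalRing A] : Prop :=
  ∃ ω : Ideal A, ω ≠ ⊥ ∧ IsCanonicalIdeal A ω ∧
    ∃ r : ℕ, 1 ≤ r ∧ ∃ f : A, symbolicPow A ω r = Ideal.span {f}

variable (p : ℕ) [Fact p.Prime] [CharP R p]

/-- `ᵉR` as an `R`-module via restriction of scalars along the `e`-fold Frobenius:
`r • x = r ^ (p ^ e) * x`. -/
def FrobRestrict (_p _e : ℕ) : Type u := R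

instance (e : ℕ) : AddCommGroup (FrobRestrict R p e) := inferInstanceAs (AddCommGroup R)

noncomputable instance (e : ℕ) : Module R (FrobRestrict R p e) :=
  Module.compHom R (iterateFrobenius R p e)

/-- `R` is F-finite: `¹R` is a finitely generated `R`-module. -/
def IsFFinite : Prop := Module.Finite R (FrobRestrict R p 1)

/-- A reduced ring `A` of characteristic `p` is strongly F-regular if for every
`c ∈ A°` there is `q = p^e` such that the inclusion `c^{1/q} A ⊆ A^{1/q}` splits
`A`-linearly; equivalently (identifying `A^{1/q}` with `A` via the `q`-th power map)
there is an additive map `φ : A → A` with `φ (r^q * x) = r * φ x` for all `r, x` and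
`φ c = 1`. -/
def StronglyFRegular (A : Type v) [CommRing A] (p : ℕ) : Prop :=
  ∀ c ∈ Rcirc A, ∃ e : ℕ, ∃ φ : A →+ A,
    (∀ r x : A, φ (r ^ p ^ e * x) = r * φ x) ∧ φ c = 1

/-- `c` is an `a`-test element: `c ∈ R°` and `c z^q a^q ⊆ I^{[q]}` for every ideal `I`,
every `z ∈ I^{*a}` and every `q = p^e`. -/
def IsTestElementFor (a : Ideal R) (c : R) : Prop :=
  c ∈ Rcirc R ∧
    ∀ I : Ideal R, ∀ z ∈ idealTC R p a I, ∀ e : ℕ, ∀ α ∈ a ^ p ^ e,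
      c * z ^ p ^ e * α ∈ idealBracketPow R I (p ^ e)

end Misc


/-!
Strong F-regularity of `R_c` yields a `p^{-E}`-linear map of `R_c` (`E ≥ 1`) sending `1` to `1`.
Twisted by `c^{q-1}` it sends `c` to `c`, and since `R` is F-finite its values on finitely many
generators of `R` over `R^q` have a common denominator, so it descends to a `p^{-E}`-linear
`θ : R → R` with `θ c = c^N`. In the same way, for `z ∈ I^{*a}` with multiplier `d ∈ R°`, a
splitting of `d` in `R_c` descends to `ψ` with `ψ d = c^K`, so `c^K` is a multiplier for `z` from
some level on. Applying `θ` to `c^{kq+1} z^{q q'} a^{q q'} ⊆ (I^{[q']})^{[q]}` turns a multiplier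
`c^m` valid from level `e + E` into `c^{m/2 + 1 + N}` valid from level `e`; iterating brings the
exponent down to `2N + 2` and the level down to `0`, independently of `a`, `I` and `z`.
-/

section Frobenius

variable {A : Type u} [CommRing A]

def IsFrobeniusSemilinear (p e : ℕ) (φ : A →+ A) : Prop :=
  ∀ r x : A, φ (r ^ p ^ e * x) = r * φ x

theorem IsFrobeniusSemilinear.comp_mulLeft {p e : ℕ} {φ : A →+ A}
    (hφ : IsFrobeniusSemilinear p e φ) (a : A) :
    IsFrobeniusSemilinear p e (φ.comp (AddMonoidHom.mulLeft a)) := fun r x => by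
  simp only [AddMonoidHom.coe_comp, Function.comp_apply, AddMonoidHom.coe_mulLeft]
  rw [mul_left_comm, hφ]

theorem IsFrobeniusSemilinear.map_mem_of_mem_idealBracketPow {p e : ℕ} {φ : A →+ A}
    (hφ : IsFrobeniusSemilinear p e φ) {J : Ideal A} {v : A}
    (hv : v ∈ idealBracketPow A J (p ^ e)) : φ v ∈ J := by
  suffices ∀ r, φ (r * v) ∈ J by simpa using this 1
  induction hv using Submodule.span_induction with
  | mem x hx =>
    obtain ⟨y, hy, rfl⟩ := hx
    intro r
    rw [mul_comm, hφ]
    exact J.mul_mem_right _ hy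
  | zero => simp
  | add x y _ _ hx hy =>
    intro r
    rw [mul_add, map_add]
    exact J.add_mem (hx r) (hy r)
  | smul a x _ hx =>
    intro r
    rw [smul_eq_mul, ← mul_assoc]
    exact hx (r * a)

theorem exists_isFrobeniusSemilinear_map_one_of_isSemisimpleRing (p : ℕ) [Fact p.Prime]
    [CharP A p] [IsReduced A] [IsSemisimpleRing A] (e : ℕ) :
    ∃ φ : A →+ A, IsFrobeniusSemilinear p e φ ∧ φ 1 = 1 := by
  have : ExpChar A p := ExpChar.prime Fact.out
  let frob : A →ₗ[A] FrobRestrict A p e :=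
    { toFun r := (r ^ p ^ e : A)
      map_add' x y := add_pow_expChar_pow x y p e
      map_smul' r x := mul_pow r x _ }
  obtain ⟨σ, hσ⟩ := IsSemisimpleModule.extension_property frob
    (iterateFrobenius_inj A p e) LinearMap.id
  refine ⟨σ.toAddMonoidHom, fun r x => σ.map_smul r (x : FrobRestrict A p e), ?_⟩
  exact (congrArg (fun x : A => σ x) (one_pow (p ^ e)).symm).trans (LinearMap.congr_fun hσ 1)

end Frobenius

section Rcirc

variable {R : Type u} [CommRing R]

theorem pow_mem_Rcirc {c : R} (hc : c ∈ Rcirc R) (n : ℕ) : c ^ n ∈ Rcirc R :=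
  fun P hP hcn => hc P hP (hP.isPrime.mem_of_pow_mem n hcn)

theorem mem_nonZeroDivisors_of_mem_Rcirc [IsReduced R] {c : R} (hc : c ∈ Rcirc R) :
    c ∈ nonZeroDivisors R := by
  refine mem_nonZeroDivisors_iff_right.mpr fun y hy => ?_
  have hy : y ∈ (⊥ : Ideal R).radical := by
    rw [← Ideal.sInf_minimalPrimes]
    exact Ideal.mem_sInf.mpr fun P hP =>
      (hP.isPrime.mem_or_mem (hy ▸ P.zero_mem)).resolve_right (hc P hP)
  exact IsReduced.eq_zero y hy

theorem algebraMap_mem_Rcirc_of_isLocalization (M : Submonoid R) {S : Type v} [CommRing S]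
    [Algebra R S] [IsLocalization M S] {d : R} (hd : d ∈ Rcirc R) :
    algebraMap R S d ∈ Rcirc S := by
  intro Q hQ hdQ
  have hQ' : Q ∈ ((⊥ : Ideal R).map (algebraMap R S)).minimalPrimes := by rwa [Ideal.map_bot]
  rw [IsLocalization.minimalPrimes_map M] at hQ'
  exact hd _ hQ' hdQ

theorem krullDimLE_zero_of_forall_mem_Rcirc_isUnit [IsNoetherianRing R]
    (h : ∀ δ ∈ Rcirc R, IsUnit δ) : Ring.KrullDimLE 0 R := by
  refine Ring.KrullDimLE.mk₀ fun I hI => ?_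
  obtain ⟨M, hM, hIM⟩ := I.exists_le_maximal hI.ne_top
  obtain ⟨P, hP, hMP⟩ := (Ideal.subset_union_prime_finite
    (minimalPrimes.finite_of_isNoetherianRing R) (f := id) ⊥ ⊥
    fun P hP _ _ => hP.isPrime).mp fun x hx => by
      by_contra hx'
      simp only [id, Set.mem_iUnion, SetLike.mem_coe, not_exists] at hx'
      exact hM.ne_top (M.eq_top_of_isUnit_mem hx (h x fun P hP => hx' P hP))
  have hPI : P ≤ I := hP.2 ⟨hI, bot_le⟩ (hIM.trans hMP)
  rwa [le_antisymm hIM (hMP.trans hPI)]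

end Rcirc

theorem StronglyFRegular.exists_isFrobeniusSemilinear_map_one {A : Type u} [CommRing A]
    [IsNoetherianRing A] [IsReduced A] {p : ℕ} [Fact p.Prime] [CharP A p]
    (hA : StronglyFRegular A p) :
    ∃ e, 1 ≤ e ∧ ∃ φ : A →+ A, IsFrobeniusSemilinear p e φ ∧ φ 1 = 1 := by
  by_cases h : ∀ δ ∈ Rcirc A, IsUnit δ
  -- then `A` is a finite product of fields, hence semisimple, and Frobenius splits
  · have := krullDimLE_zero_of_forall_mem_Rcirc_isUnit h
    have := isArtinianRing_iff_krullDimLE_zero.mpr this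
    have := IsArtinianRing.isSemisimpleRing_of_isReduced A
    exact ⟨1, le_rfl, exists_isFrobeniusSemilinear_map_one_of_isSemisimpleRing p 1⟩
  push Not at h
  obtain ⟨δ, hδ, hδu⟩ := h
  obtain ⟨e, φ, hφ : IsFrobeniusSemilinear p e φ, hφδ⟩ := hA δ hδ
  refine ⟨e, Nat.one_le_iff_ne_zero.mpr ?_, _, hφ.comp_mulLeft δ, by simpa using hφδ⟩
  -- a level-`0` splitting is `A`-linear, so it would make `δ` a unit
  rintro rfl
  refine hδu (IsUnit.of_mul_eq_one (φ 1) ?_)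
  simpa [hφδ] using (hφ δ 1).symm

section Descent

variable {R : Type u} [CommRing R] {p : ℕ} [Fact p.Prime] [CharP R p]

theorem IsFFinite.exists_frobenius_generators (hFF : IsFFinite R p) (e : ℕ) :
    ∃ (ι : Type) (_ : Fintype ι) (g : ι → R),
      ∀ x, ∃ r : ι → R, ∑ i, r i ^ p ^ e * g i = x := by
  obtain ⟨n, s, hs1⟩ :
      ∃ n, ∃ s : Fin n → R, ∀ x, ∃ ρ : Fin n → R, ∑ i, ρ i ^ p * s i = x := by
    obtain ⟨n, s, hs⟩ := @Module.Finite.exists_fin R (FrobRestrict R p 1) _ _ _ hFF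
    refine ⟨n, s, fun x => ?_⟩
    let x' : FrobRestrict R p 1 := x
    have hx : x' ∈ Submodule.span R (Set.range s) := hs ▸ Submodule.mem_top
    obtain ⟨ρ, hρ⟩ := (Submodule.mem_span_range_iff_exists_fun R).mp hx
    -- the scalar action on `FrobRestrict R p 1` is `r • y = r ^ p ^ 1 * y`
    exact ⟨ρ, by rw [← pow_one p]; exact hρ⟩
  induction e with
  | zero => exact ⟨Unit, inferInstance, fun _ => 1, fun x => ⟨fun _ => x, by simp⟩⟩
  | succ e ih =>
    obtain ⟨ι, _, g, hg⟩ := ih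
    refine ⟨ι × Fin n, inferInstance, fun ji => g ji.1 ^ p * s ji.2, fun x => ?_⟩
    obtain ⟨ρ, rfl⟩ := hs1 x
    choose σ hσ using fun i => hg (ρ i)
    refine ⟨fun ji => σ ji.2 ji.1, ?_⟩
    rw [Fintype.sum_prod_type, Finset.sum_comm]
    refine Finset.sum_congr rfl fun i _ => ?_
    rw [← hσ i, sum_pow_char, Finset.sum_mul]
    refine Finset.sum_congr rfl fun j _ => ?_
    rw [mul_pow, ← pow_mul, ← pow_succ]
    ring

variable {S : Type v} [CommRing S] [Algebra R S] {c : R} [IsLocalization.Away c S]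

theorem IsFrobeniusSemilinear.exists_descent (hinj : Function.Injective (algebraMap R S))
    (hFF : IsFFinite R p) {e : ℕ} {φ : S →+ S} (hφ : IsFrobeniusSemilinear p e φ) :
    ∃ K, ∃ ψ : R →+ R, IsFrobeniusSemilinear p e ψ ∧
      ∀ x, algebraMap R S (ψ x) = algebraMap R S c ^ K * φ (algebraMap R S x) := by
  classical
  obtain ⟨ι, _, g, hg⟩ := hFF.exists_frobenius_generators e
  choose k t ht using fun i => IsLocalization.Away.surj c (φ (algebraMap R S (g i)))
  obtain ⟨K, hK⟩ : ∃ K, ∀ i, k i ≤ K :=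
    ⟨Finset.univ.sup k, fun i => Finset.le_sup (Finset.mem_univ i)⟩
  have hlift : ∀ x, ∃ y, algebraMap R S y = algebraMap R S c ^ K * φ (algebraMap R S x) := by
    intro x
    obtain ⟨r, rfl⟩ := hg x
    refine ⟨∑ i, r i * c ^ (K - k i) * t i, ?_⟩
    simp only [map_sum, map_mul, map_pow, Finset.mul_sum]
    refine Finset.sum_congr rfl fun i _ => ?_
    rw [hφ, ← ht i, ← pow_sub_mul_pow _ (hK i)]
    ring
  choose ψ hψ using hlift
  refine ⟨K, AddMonoidHom.mk' ψ fun x y => hinj ?_, fun r x => hinj ?_, hψ⟩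
  · simp only [map_add, hψ, mul_add]
  · simp only [AddMonoidHom.mk'_apply, map_mul, map_pow, hψ]
    rw [hφ]
    ring

theorem IsFrobeniusSemilinear.exists_map_eq_pow (hinj : Function.Injective (algebraMap R S))
    (hFF : IsFFinite R p) {e : ℕ} {φ : S →+ S} (hφ : IsFrobeniusSemilinear p e φ) {x : R}
    {j : ℕ} (hx : φ (algebraMap R S x) = algebraMap R S c ^ j) :
    ∃ n, ∃ ψ : R →+ R, IsFrobeniusSemilinear p e ψ ∧ ψ x = c ^ n := by
  obtain ⟨K, ψ, hψ, hψx⟩ := hφ.exists_descent (c := c) hinj hFF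
  exact ⟨K + j, ψ, hψ, hinj (by rw [hψx, hx, map_pow, pow_add])⟩

end Descent

section TightClosureWitness

variable {R : Type u} [CommRing R] {p : ℕ}

theorem idealBracketPow_mul_le (I : Ideal R) (q q' : ℕ) :
    idealBracketPow R I (q * q') ≤ idealBracketPow R (idealBracketPow R I q) q' := by
  refine Ideal.span_le.mpr ?_
  rintro _ ⟨x, hx, rfl⟩
  show x ^ (q * q') ∈ _
  rw [pow_mul]
  exact Ideal.subset_span ⟨x ^ q, Ideal.subset_span ⟨x, hx, rfl⟩, rfl⟩

def TightClosureWitness (p : ℕ) (a I : Ideal R) (z w : R) (e₀ : ℕ) : Prop :=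
  ∀ e, e₀ ≤ e → ∀ α ∈ a ^ p ^ e, w * z ^ p ^ e * α ∈ idealBracketPow R I (p ^ e)

variable {a I : Ideal R} {z w : R} {e₀ : ℕ}

theorem TightClosureWitness.mono {e₁ : ℕ} (h : TightClosureWitness p a I z w e₀)
    (he : e₀ ≤ e₁) : TightClosureWitness p a I z w e₁ :=
  fun e he' => h e (he.trans he')

theorem TightClosureWitness.mul_left (h : TightClosureWitness p a I z w e₀) (y : R) :
    TightClosureWitness p a I z (y * w) e₀ := fun e he α hα => by
  rw [mul_assoc, mul_assoc]
  exact Ideal.mul_mem_left _ y (by simpa only [mul_assoc] using h e he α hα)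

theorem TightClosureWitness.pow_mono {c : R} {m n : ℕ}
    (h : TightClosureWitness p a I z (c ^ m) e₀) (hmn : m ≤ n) :
    TightClosureWitness p a I z (c ^ n) e₀ := by
  simpa only [pow_sub_mul_pow c hmn] using h.mul_left (c ^ (n - m))

theorem TightClosureWitness.map {E : ℕ} {ψ : R →+ R} (hψ : IsFrobeniusSemilinear p E ψ)
    (h : TightClosureWitness p a I z w (e₀ + E)) : TightClosureWitness p a I z (ψ w) e₀ := by
  intro e he α hα
  have hαq : α ^ p ^ E ∈ a ^ p ^ (e + E) := by
    rw [pow_add, pow_mul]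
    exact Ideal.pow_mem_pow hα _
  have hmem := idealBracketPow_mul_le I (p ^ e) (p ^ E)
    (pow_add p e E ▸ h (e + E) (by omega) _ hαq)
  have hw : w * z ^ (p ^ e * p ^ E) * α ^ p ^ E = (z ^ p ^ e * α) ^ p ^ E * w := by
    rw [pow_mul, mul_pow]
    ring
  rw [hw] at hmem
  convert hψ.map_mem_of_mem_idealBracketPow hmem using 1
  rw [hψ]
  ring

end TightClosureWitness

section Iteration

variable {R : Type u} [CommRing R] {p : ℕ} [Fact p.Prime] {a I : Ideal R} {z c : R}
  {E N : ℕ} {θ : R →+ R}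

theorem TightClosureWitness.pow_step (hθ : IsFrobeniusSemilinear p E θ) (hE : 1 ≤ E)
    (hθc : θ c = c ^ N) {m e₀ : ℕ} (h : TightClosureWitness p a I z (c ^ m) (e₀ + E)) :
    TightClosureWitness p a I z (c ^ max (2 * N + 2) (m - 1)) e₀ := by
  set k := m / 2 + 1
  have hq : 2 ≤ p ^ E := (Fact.out : p.Prime).two_le.trans (Nat.le_self_pow (by omega) p)
  have hm : m ≤ k * p ^ E + 1 := by
    have := Nat.mul_le_mul_left k hq
    omega
  have hθk : θ (c ^ (k * p ^ E + 1)) = c ^ (k + N) := by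
    rw [pow_succ, pow_mul, hθ, hθc, ← pow_add]
  exact (hθk ▸ (h.pow_mono hm).map hθ).pow_mono (by omega)

theorem TightClosureWitness.pow_iterate (hθ : IsFrobeniusSemilinear p E θ) (hE : 1 ≤ E)
    (hθc : θ c = c ^ N) {m e₀ : ℕ} (h : TightClosureWitness p a I z (c ^ m) e₀) (k : ℕ) :
    TightClosureWitness p a I z (c ^ max (2 * N + 2) (m - k)) (e₀ - k * E) := by
  induction k with
  | zero => simpa using h.pow_mono (le_max_right _ _)
  | succ k ih =>
    have hle : e₀ - k * E ≤ e₀ - (k + 1) * E + E := by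
      rw [add_one_mul]
      omega
    exact ((ih.mono hle).pow_step hθ hE hθc).pow_mono (by omega)

theorem TightClosureWitness.pow_two_mul_add_two (hθ : IsFrobeniusSemilinear p E θ)
    (hE : 1 ≤ E) (hθc : θ c = c ^ N) {m e₀ : ℕ}
    (h : TightClosureWitness p a I z (c ^ m) e₀) :
    TightClosureWitness p a I z (c ^ (2 * N + 2)) 0 := by
  have hlevel : e₀ - (e₀ + m) * E = 0 :=
    Nat.sub_eq_zero_of_le ((Nat.le_add_right e₀ m).trans (Nat.le_mul_of_pos_right _ hE))
  simpa [hlevel] using h.pow_iterate hθ hE hθc (e₀ + m)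

end Iteration

/-- **Theorem 1.7(1)/Lemma 1.8.** If `R` is F-finite, reduced, Noetherian of prime
characteristic `p`, `c ∈ R°` and `R_c` is strongly F-regular, then some power `c^n`
(`n ≥ 1`) is an `a`-test element for every ideal `a` of `R`. -/
theorem exists_pow_isTestElement_of_stronglyFRegular_localization
    (R : Type u) [CommRing R] [IsNoetherianRing R]
    (p : ℕ) [Fact p.Prime] [CharP R p]
    (hred : IsReduced R) (hFF : IsFFinite R p)
    (c : R) (hc : c ∈ Rcirc R)
    (hreg : StronglyFRegular (Localization.Away c) p) :
    ∃ n : ℕ, 1 ≤ n ∧ ∀ a : Ideal R, IsTestElementFor R p a (c ^ n) := by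
  have hinj : Function.Injective (algebraMap R (Localization.Away c)) :=
    IsLocalization.injective _ (Submonoid.powers_le.mpr (mem_nonZeroDivisors_of_mem_Rcirc hc))
  have : CharP (Localization.Away c) p := charP_of_injective_algebraMap hinj p
  obtain ⟨E, hE, φ, hφ, hφ1⟩ := hreg.exists_isFrobeniusSemilinear_map_one
  have hφc : φ (algebraMap R _ c ^ (p ^ E - 1) * algebraMap R _ c) = algebraMap R _ c ^ 1 := by
    rw [← pow_succ, Nat.sub_add_cancel (Nat.one_le_pow _ _ (Fact.out : p.Prime).pos),
      ← mul_one (_ ^ p ^ E), hφ, hφ1, mul_one, pow_one]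
  obtain ⟨N, θ, hθ, hθc⟩ :=
    (hφ.comp_mulLeft (algebraMap R _ c ^ (p ^ E - 1))).exists_map_eq_pow hinj hFF hφc
  refine ⟨2 * N + 2, by omega, fun a => ⟨pow_mem_Rcirc hc _, ?_⟩⟩
  rintro I z ⟨d, hd, e₀, hz : TightClosureWitness p a I z d e₀⟩ e α hα
  obtain ⟨Ed, φd, hφd : IsFrobeniusSemilinear p Ed φd, hφdd⟩ :=
    hreg _ (algebraMap_mem_Rcirc_of_isLocalization (Submonoid.powers c) hd)
  obtain ⟨K, ψ, hψ, hψd⟩ := hφd.exists_map_eq_pow (c := c) (j := 0) hinj hFF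
    (by rw [hφdd, pow_zero])
  have hK : TightClosureWitness p a I z (c ^ K) e₀ :=
    hψd ▸ (hz.mono (Nat.le_add_right e₀ Ed)).map hψ
  exact hK.pow_two_mul_add_two hθ hE hθc e (Nat.zero_le e) α hα
end

section
/- Let R be a Noetherian commutative ring of prime characteristic p and let a and b be ideals of R. Then τ(a)·b ⊆ τ(ab). Moreover, if R is a complete Noetherian local ring and b is a principal ideal, then τ(a)·b = τ(ab). -/
open TensorProduct

universe u v

/-! `τ(a)·b ⊆ τ(ab)` because `s • z ∈ 0^{*a}_M` whenever `s ∈ b` and `z ∈ 0^{*ab}_M`.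

Conversely let `b = (f)` and `r ∈ τ(af)`. Given `z ∈ 0^{*a}_M`, adjoin to `M` an element `w` with
`f w = z`; then `w ∈ 0^{*af}`, and `r w = 0` yields `t` with `f t = r` and `t z = 0`. These
solutions form a coset of `Ann f ∩ Ann z`, and the cosets for all pairs `(M, z)` form a downward
directed family (take direct sums). A complete Noetherian local ring is linearly compact — the
quotients `R ⧸ 𝔪 ^ j` are Artinian, and a Mittag-Leffler argument produces a Cauchy sequence — so
the cosets have a common point `x`; it lies in `τ(a)` and `f x = r`. -/

section ZeroTightClosure

variable {R : Type u} [CommRing R]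

lemma one_mem_Rcirc : (1 : R) ∈ Rcirc R :=
  fun P hP h1 => hP.1.1.ne_top ((Ideal.eq_top_iff_one P).mpr h1)

lemma mul_mem_Rcirc {c d : R} (hc : c ∈ Rcirc R) (hd : d ∈ Rcirc R) : c * d ∈ Rcirc R :=
  fun P hP hcd => (hP.1.1.mem_or_mem hcd).elim (hc P hP) (hd P hP)

variable (p : ℕ) [Fact p.Prime] [CharP R p] {e : ℕ}
variable {M : Type v} [AddCommGroup M] [Module R M] {N : Type*} [AddCommGroup N] [Module R N]

lemma frobM_zero : frobM R p e (0 : M) = 0 := tmul_zero _ _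

lemma frobM_add (x y : M) : frobM R p e (x + y) = frobM R p e x + frobM R p e y :=
  tmul_add _ _ _

lemma frobM_smul (s : R) (z : M) : frobM R p e (s • z) = s ^ p ^ e • frobM R p e z :=
  (smul_tmul s (1 : FrobAlg R p e) z).symm

lemma mem_modTC_bot_iff {a : Ideal R} {z : M} :
    z ∈ modTC R p a (⊥ : Submodule R M) ↔
      ∃ c ∈ Rcirc R, ∃ e₀ : ℕ, ∀ e, e₀ ≤ e → ∀ α ∈ a ^ p ^ e,
        (c * α) • frobM R p e z = 0 := by
  have hbot : ∀ e, bracketPow R p e (⊥ : Submodule R M) = ⊥ := fun e => by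
    rw [bracketPow, Submodule.bot_coe, Set.image_singleton, frobM_zero,
      Submodule.span_zero_singleton]
  simp only [modTC, Set.mem_ofPred_eq, hbot, Submodule.mem_bot]

variable {a : Ideal R}

lemma zero_mem_modTC_bot : (0 : M) ∈ modTC R p a (⊥ : Submodule R M) :=
  (mem_modTC_bot_iff p).2 ⟨1, one_mem_Rcirc, 0, fun _ _ _ _ => by rw [frobM_zero, smul_zero]⟩

lemma add_mem_modTC_bot {z₁ z₂ : M} (h₁ : z₁ ∈ modTC R p a (⊥ : Submodule R M))
    (h₂ : z₂ ∈ modTC R p a (⊥ : Submodule R M)) :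
    z₁ + z₂ ∈ modTC R p a (⊥ : Submodule R M) := by
  obtain ⟨c₁, hc₁, e₁, H₁⟩ := (mem_modTC_bot_iff p).1 h₁
  obtain ⟨c₂, hc₂, e₂, H₂⟩ := (mem_modTC_bot_iff p).1 h₂
  refine (mem_modTC_bot_iff p).2 ⟨c₁ * c₂, mul_mem_Rcirc hc₁ hc₂, max e₁ e₂, fun e he α hα => ?_⟩
  have h₁' : (c₁ * c₂ * α) • frobM R p e z₁ = c₂ • (c₁ * α) • frobM R p e z₁ := by
    rw [smul_smul]; ring_nf
  have h₂' : (c₁ * c₂ * α) • frobM R p e z₂ = c₁ • (c₂ * α) • frobM R p e z₂ := by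
    rw [smul_smul]; ring_nf
  rw [frobM_add, smul_add, h₁', h₂', H₁ e (le_of_max_le_left he) α hα,
    H₂ e (le_of_max_le_right he) α hα, smul_zero, smul_zero, add_zero]

lemma map_mem_modTC_bot (φ : M →ₗ[R] N) {z : M} (hz : z ∈ modTC R p a (⊥ : Submodule R M)) :
    φ z ∈ modTC R p a (⊥ : Submodule R N) := by
  obtain ⟨c, hc, e₀, H⟩ := (mem_modTC_bot_iff p).1 hz
  refine (mem_modTC_bot_iff p).2 ⟨c, hc, e₀, fun e he α hα => ?_⟩
  exact (LinearMap.map_smul (φ.baseChange (FrobAlg R p e)) (c * α : R) _).symm.trans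
    ((congrArg (φ.baseChange (FrobAlg R p e)) (H e he α hα)).trans (LinearMap.map_zero _))

lemma prodMk_mem_modTC_bot {z₁ : M} {z₂ : N} (h₁ : z₁ ∈ modTC R p a (⊥ : Submodule R M))
    (h₂ : z₂ ∈ modTC R p a (⊥ : Submodule R N)) :
    (z₁, z₂) ∈ modTC R p a (⊥ : Submodule R (M × N)) := by
  simpa using add_mem_modTC_bot p (map_mem_modTC_bot p (LinearMap.inl R M N) h₁)
    (map_mem_modTC_bot p (LinearMap.inr R M N) h₂)

lemma smul_mem_modTC_bot_of_mem_mul {b : Ideal R} {s : R} (hs : s ∈ b) {z : M}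
    (hz : z ∈ modTC R p (a * b) (⊥ : Submodule R M)) :
    s • z ∈ modTC R p a (⊥ : Submodule R M) := by
  obtain ⟨c, hc, e₀, H⟩ := (mem_modTC_bot_iff p).1 hz
  refine (mem_modTC_bot_iff p).2 ⟨c, hc, e₀, fun e he α hα => ?_⟩
  have hmem : α * s ^ p ^ e ∈ (a * b) ^ p ^ e := by
    rw [mul_pow]; exact Ideal.mul_mem_mul hα (Ideal.pow_mem_pow hs _)
  rw [frobM_smul, smul_smul, mul_assoc, H e he _ hmem]

lemma mem_modTC_bot_mul_span_of_smul_mem {f : R} {w : M}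
    (hw : f • w ∈ modTC R p a (⊥ : Submodule R M)) :
    w ∈ modTC R p (a * Ideal.span {f}) (⊥ : Submodule R M) := by
  obtain ⟨c, hc, e₀, H⟩ := (mem_modTC_bot_iff p).1 hw
  refine (mem_modTC_bot_iff p).2 ⟨c, hc, e₀, fun e he α hα => ?_⟩
  rw [mul_pow, Ideal.span_singleton_pow] at hα
  obtain ⟨β, hβ, rfl⟩ := Ideal.mem_mul_span_singleton.mp hα
  rw [← H e he β hβ, frobM_smul, smul_smul, mul_assoc]

end ZeroTightClosure

section Tau

variable {R : Type u} [CommRing R] (p : ℕ) [Fact p.Prime] [CharP R p] {a : Ideal R}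

structure TightClosureWitness_s4 (R : Type u) [CommRing R] (p : ℕ) [Fact p.Prime] [CharP R p]
    (a : Ideal R) : Type (u + 1) where
  carrier : Type u
  [addCommGroup : AddCommGroup carrier]
  [module : Module R carrier]
  [finite : Module.Finite R carrier]
  z : carrier
  mem_modTC : z ∈ modTC R p a (⊥ : Submodule R carrier)

attribute [instance] TightClosureWitness_s4.addCommGroup TightClosureWitness_s4.module
  TightClosureWitness_s4.finite

namespace TightClosureWitness_s4

instance : Nonempty (TightClosureWitness_s4 R p a) := ⟨⟨R, 0, zero_mem_modTC_bot p⟩⟩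

variable {p}

def prod (w₁ w₂ : TightClosureWitness_s4 R p a) : TightClosureWitness_s4 R p a :=
  ⟨w₁.carrier × w₂.carrier, (w₁.z, w₂.z), prodMk_mem_modTC_bot p w₁.mem_modTC w₂.mem_modTC⟩

lemma smul_prod_z_eq_zero_iff (w₁ w₂ : TightClosureWitness_s4 R p a) (s : R) :
    s • (w₁.prod w₂).z = 0 ↔ s • w₁.z = 0 ∧ s • w₂.z = 0 :=
  Prod.mk_eq_zero

end TightClosureWitness_s4

lemma mem_tauIdeal_iff {r : R} :
    r ∈ tauIdeal R p a ↔ ∀ w : TightClosureWitness_s4 R p a, r • w.z = 0 :=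
  ⟨fun h w => h w.carrier inferInstance w.z w.mem_modTC,
    fun h _ _ _ _ z hz => h ⟨_, z, hz⟩⟩

lemma tauIdeal_mul_le (b : Ideal R) : tauIdeal R p a * b ≤ tauIdeal R p (a * b) :=
  Ideal.mul_le.2 fun r hr s hs _ _ _ _ z hz => by
    rw [mul_smul]
    exact hr _ inferInstance _ (smul_mem_modTC_bot_of_mem_mul p hs hz)

lemma exists_mul_eq_and_smul_eq_zero_of_mem_tauIdeal {f r : R}
    (hr : r ∈ tauIdeal R p (a * Ideal.span {f})) {M : Type u} [AddCommGroup M] [Module R M]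
    [Module.Finite R M] {z : M} (hz : z ∈ modTC R p a (⊥ : Submodule R M)) :
    ∃ t : R, f * t = r ∧ t • z = 0 := by
  -- In `(M × R) ⧸ R (z, -f)` the class `w` of `(0, 1)` satisfies `f • w = z`.
  let S : Submodule R (M × R) := R ∙ (z, -f)
  let w : (M × R) ⧸ S := S.mkQ (0, 1)
  have hfw : f • w = S.mkQ (LinearMap.inl R M R z) := by
    rw [← map_smul, Submodule.mkQ_apply, Submodule.mkQ_apply, Submodule.Quotient.eq]
    exact Submodule.mem_span_singleton.2 ⟨-1, by ext <;> simp⟩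
  have hw := mem_modTC_bot_mul_span_of_smul_mem p
    (hfw ▸ map_mem_modTC_bot p (S.mkQ ∘ₗ LinearMap.inl R M R) hz)
  have hrw : r • w = 0 := hr _ inferInstance w hw
  rw [← map_smul, Submodule.mkQ_apply, Submodule.Quotient.mk_eq_zero,
    Submodule.mem_span_singleton] at hrw
  obtain ⟨s, hs⟩ := hrw
  simp only [Prod.smul_mk, smul_eq_mul, smul_zero, mul_one, Prod.mk.injEq] at hs
  exact ⟨-s, by rw [← hs.2]; ring, by rw [neg_smul, hs.1, neg_zero]⟩

end Tau

lemma exists_sub_mem_pow_of_succ_sub_mem_pow {R : Type*} [CommRing R] {I : Ideal R}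
    [IsPrecomplete I R] {s : ℕ → R} (hs : ∀ j, s (j + 1) - s j ∈ I ^ j) :
    ∃ y, ∀ j, y - s j ∈ I ^ j := by
  have hI : ∀ j, (I ^ j • ⊤ : Ideal R) = I ^ j := fun j => by rw [smul_eq_mul, Ideal.mul_top]
  obtain ⟨y, hy⟩ := IsPrecomplete.prec inferInstance <|
    (AdicCompletion.isAdicCauchy_iff I R s).2 fun j => by
      rw [SModEq.sub_mem, hI, ← neg_sub, neg_mem_iff]; exact hs j
  refine ⟨y, fun j => ?_⟩
  have := hy j
  rwa [SModEq.sub_mem, hI, ← neg_sub, neg_mem_iff] at this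

section CompleteLocal

variable {R : Type u} [CommRing R] [IsNoetherianRing R] [IsLocalRing R]

local notation "𝔪" => IsLocalRing.maximalIdeal R

lemma mem_of_forall_mem_sup_maximalIdeal_pow {A : Ideal R} {x : R} (h : ∀ j, x ∈ A ⊔ 𝔪 ^ j) :
    x ∈ A := by
  rw [← Ideal.Quotient.eq_zero_iff_mem]
  refine (inferInstance : IsHausdorff 𝔪 (R ⧸ A)).haus _ fun j => SModEq.zero.2 ?_
  obtain ⟨u, hu, v, hv, rfl⟩ := Submodule.mem_sup.1 (h j)
  rw [map_add, Ideal.Quotient.eq_zero_iff_mem.2 hu, zero_add, ← mul_one v]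
  exact Submodule.smul_mem_smul (M := R ⧸ A) hv (Submodule.mem_top (x := 1))

lemma isArtinianRing_quotient_maximalIdeal_pow (j : ℕ) : IsArtinianRing (R ⧸ 𝔪 ^ j) := by
  rcases j with _ | j
  · rw [pow_zero, Ideal.one_eq_top]; infer_instance
  · refine IsLocalRing.quotient_artinian_of_mem_minimalPrimes_of_isLocalRing _ ?_
    rw [← Ideal.radical_minimalPrimes, Ideal.radical_pow _ j.succ_ne_zero,
      (IsLocalRing.maximalIdeal.isMaximal R).isPrime.radical,
      Ideal.minimalPrimes_eq_subsingleton_self]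
    rfl

lemma exists_le_sup_maximalIdeal_pow_of_directed {ι : Type*} [Nonempty ι] {A : ι → Ideal R}
    (hA : Directed (· ≥ ·) A) (j : ℕ) : ∃ i₀, ∀ i, A i₀ ≤ A i ⊔ 𝔪 ^ j := by
  have := isArtinianRing_quotient_maximalIdeal_pow (R := R) j
  let π := Ideal.Quotient.mk (𝔪 ^ j)
  obtain ⟨_, ⟨i₀, rfl⟩, hmin⟩ :=
    IsArtinian.set_has_minimal (Set.range fun i => (A i).map π) (Set.range_nonempty _)
  refine ⟨i₀, fun i => ?_⟩
  obtain ⟨k, hki, hki₀⟩ := hA i i₀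
  have hk : (A k).map π = (A i₀).map π :=
    eq_of_le_of_not_lt (Ideal.map_mono hki₀) (hmin _ ⟨k, rfl⟩)
  calc A i₀ ≤ ((A i₀).map π).comap π := Ideal.le_comap_map
    _ = A k ⊔ 𝔪 ^ j := by
      rw [← hk, Ideal.comap_map_of_surjective' _ Ideal.Quotient.mk_surjective, Ideal.mk_ker]
    _ ≤ A i ⊔ 𝔪 ^ j := sup_le_sup_right hki _

variable [IsAdicComplete (IsLocalRing.maximalIdeal R) R]

lemma exists_sub_mem_of_antitone {J : ℕ → Ideal R} (hJ : Antitone J) {x : ℕ → R}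
    (hx : ∀ n, x (n + 1) - x n ∈ J n) : ∃ y, ∀ n, y - x n ∈ J n := by
  have hx' : ∀ {n n'}, n ≤ n' → x n' - x n ∈ J n := by
    intro n n' hn
    induction n', hn using Nat.le_induction with
    | base => rw [sub_self]; exact zero_mem _
    | succ n' hle ih => simpa using add_mem (hJ hle (hx n')) ih
  -- Mittag-Leffler: the images of the `J n` in the Artinian ring `R ⧸ 𝔪 ^ j` stabilize.
  obtain ⟨φ, hφ, hstab⟩ := Filter.extraction_forall_of_eventually' fun j =>
    (exists_le_sup_maximalIdeal_pow_of_directed hJ.directed_ge j).imp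
      fun N hN N' hN' n => (hJ hN').trans (hN n)
  have step : ∀ j y, y - x (φ j) ∈ J (φ j) →
      ∃ y', y' - x (φ (j + 1)) ∈ J (φ (j + 1)) ∧ y' - y ∈ 𝔪 ^ j := by
    intro j y hy
    have : y - x (φ (j + 1)) ∈ J (φ (j + 1)) ⊔ 𝔪 ^ j := hstab j (φ (j + 1)) <| by
      simpa using sub_mem hy (hx' (hφ.monotone j.le_succ))
    obtain ⟨u, hu, v, hv, huv⟩ := Submodule.mem_sup.1 this
    refine ⟨y - v, ?_, by simpa using hv⟩
    convert hu using 1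
    linear_combination -huv
  choose! next hnext using step
  let s : ℕ → R := fun j => Nat.rec (x (φ 0)) next j
  have hs : ∀ j, s j - x (φ j) ∈ J (φ j) := fun j => by
    induction j with
    | zero => exact (sub_self (x (φ 0))).symm ▸ zero_mem _
    | succ j ih => exact (hnext j _ ih).1
  obtain ⟨y, hy⟩ := exists_sub_mem_pow_of_succ_sub_mem_pow (I := 𝔪) (s := s) fun j =>
    (hnext j _ (hs j)).2
  refine ⟨y, fun n => mem_of_forall_mem_sup_maximalIdeal_pow fun j => ?_⟩
  have hk : n ≤ φ (max n j) := (le_max_left n j).trans (hφ.id_le _)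
  rw [show y - x n = (x (φ (max n j)) - x n) + (s (max n j) - x (φ (max n j)))
    + (y - s (max n j)) by ring]
  exact add_mem (Submodule.mem_sup_left (add_mem (hx' hk) (hJ hk (hs _))))
    (Submodule.mem_sup_right (Ideal.pow_le_pow_right (le_max_right n j) (hy _)))

theorem exists_forall_sub_mem_of_directed {ι : Type*} [Nonempty ι] (t : ι → R) (A : ι → Ideal R)
    (hdir : ∀ i i', ∃ k, A k ≤ A i ⊓ A i' ∧ t k - t i ∈ A i ∧ t k - t i' ∈ A i') :
    ∃ x, ∀ i, x - t i ∈ A i := by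
  have hA : Directed (· ≥ ·) A := fun i i' => (hdir i i').imp fun _ hk => le_inf_iff.1 hk.1
  choose i₀ hi₀ using exists_le_sup_maximalIdeal_pow_of_directed hA
  choose k hkA hki hki' using hdir
  let c : ℕ → ι := fun n => Nat.rec (i₀ 0) (fun n cn => k cn (i₀ (n + 1))) n
  have hc : ∀ n i, A (c n) ≤ A i ⊔ 𝔪 ^ n := by
    rintro (_ | n) i
    · exact hi₀ 0 i
    · exact ((hkA _ _).trans inf_le_right).trans (hi₀ (n + 1) i)
  obtain ⟨x, hx⟩ := exists_sub_mem_of_antitone (J := A ∘ c) (x := t ∘ c)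
    (antitone_nat_of_succ_le fun n => (hkA _ _).trans inf_le_left) fun n => hki _ _
  refine ⟨x, fun i => mem_of_forall_mem_sup_maximalIdeal_pow fun n => ?_⟩
  rw [show x - t i = (x - t (c n)) - (t (k (c n) i) - t (c n)) + (t (k (c n) i) - t i) by ring]
  exact add_mem (hc n i (sub_mem (hx n) (hki _ _))) (Submodule.mem_sup_left (hki' _ _))

end CompleteLocal

lemma exists_mem_tauIdeal_mul_eq_of_mem_tauIdeal_mul_span {R : Type u} [CommRing R]
    [IsNoetherianRing R] [IsLocalRing R] [IsAdicComplete (IsLocalRing.maximalIdeal R) R]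
    (p : ℕ) [Fact p.Prime] [CharP R p] {a : Ideal R} {f r : R}
    (hr : r ∈ tauIdeal R p (a * Ideal.span {f})) : ∃ x ∈ tauIdeal R p a, f * x = r := by
  choose t ht using fun w : TightClosureWitness_s4 R p a =>
    exists_mul_eq_and_smul_eq_zero_of_mem_tauIdeal p hr w.mem_modTC
  let A (w : TightClosureWitness_s4 R p a) : Ideal R := (R ∙ ((f, w.z) : R × w.carrier)).annihilator
  have mem_A (w : TightClosureWitness_s4 R p a) (s : R) : s ∈ A w ↔ s * f = 0 ∧ s • w.z = 0 := by
    rw [Submodule.mem_annihilator_span_singleton, Prod.smul_mk, Prod.mk_eq_zero, smul_eq_mul]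
  have sub_mem_A (w w' : TightClosureWitness_s4 R p a) (hw : t w' • w.z = 0) : t w' - t w ∈ A w := by
    rw [mem_A, sub_mul, mul_comm, (ht w').1, mul_comm, (ht w).1, sub_self, sub_smul, hw,
      (ht w).2, sub_self]
    exact ⟨rfl, rfl⟩
  obtain ⟨x, hx⟩ := exists_forall_sub_mem_of_directed t A fun w₁ w₂ => by
    have h := (TightClosureWitness_s4.smul_prod_z_eq_zero_iff w₁ w₂ _).1 (ht (w₁.prod w₂)).2
    refine ⟨w₁.prod w₂, fun s hs => ?_, sub_mem_A _ _ h.1, sub_mem_A _ _ h.2⟩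
    rw [mem_A, TightClosureWitness_s4.smul_prod_z_eq_zero_iff] at hs
    exact ⟨(mem_A _ _).2 ⟨hs.1, hs.2.1⟩, (mem_A _ _).2 ⟨hs.1, hs.2.2⟩⟩
  refine ⟨x, (mem_tauIdeal_iff p).2 fun w => ?_, ?_⟩
  · rw [← sub_add_cancel x (t w), add_smul, ((mem_A w _).1 (hx w)).2, (ht w).2, add_zero]
  · obtain ⟨w⟩ := (inferInstance : Nonempty (TightClosureWitness_s4 R p a))
    rw [← sub_add_cancel x (t w), mul_add, mul_comm, ((mem_A w _).1 (hx w)).1, zero_add, (ht w).1]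

/-- **Proposition 1.11(1).** `τ(a)·b ⊆ τ(ab)`; if `R` is a complete Noetherian local
ring and `b` is principal, then `τ(a)·b = τ(ab)`. -/
theorem tau_mul_le_tau_of_mul_and_eq_of_principal
    (R : Type u) [CommRing R] [IsNoetherianRing R]
    (p : ℕ) [Fact p.Prime] [CharP R p] (a b : Ideal R) :
    tauIdeal R p a * b ≤ tauIdeal R p (a * b) ∧
    (∀ (hloc : IsLocalRing R),
      IsAdicComplete (@IsLocalRing.maximalIdeal R _ hloc) R →
      (∃ f : R, b = Ideal.span {f}) →
      tauIdeal R p a * b = tauIdeal R p (a * b)) := by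
  refine ⟨tauIdeal_mul_le p b, fun _ _ ⟨f, hb⟩ => ?_⟩
  subst hb
  refine (tauIdeal_mul_le p _).antisymm fun r hr => ?_
  obtain ⟨x, hx, rfl⟩ := exists_mem_tauIdeal_mul_eq_of_mem_tauIdeal_mul_span p hr
  exact mul_comm f x ▸ Ideal.mul_mem_mul hx (Ideal.mem_span_singleton_self f)
end
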